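/- arXiv:1402.0080 — 2 statements merged into one kernel-verified Lean document; each statement's English description precedes it below -/
import Mathlib

section
/- Suppose liminf_{k→∞} log(n₁⋯n_k)/(−log(c₁⋯c_k)) < limsup_{k→∞} log(n₁⋯n_k)/(−log(c₁⋯c_k)). Then no Moran set E ∈ M(J,{n_k},{c_k}) (with inf_k c_k > 0) is Ahlfors–David s-regular for any s ∈ (0,∞). -/
open scoped ENNReal

noncomputable section

open Filter MeasureTheory

/-- A compact set `A` is *homogeneous* with respect to the Borel probability measure `μ`
supported on `A` and constants `lam ≥ 1`, `kappa ∈ (0,1)`, `1 < del ≤ Del`. -/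
structure IsHomog {X : Type*} [MetricSpace X] [MeasurableSpace X]
    (A : Set X) (μ : Measure X) (lam kappa del Del : ℝ) : Prop where
  compact : IsCompact A
  diam_pos : 0 < Metric.diam A
  prob : IsProbabilityMeasure μ
  supp_null : μ Aᶜ = 0
  supp_pos : ∀ x ∈ A, ∀ r : ℝ, 0 < r → 0 < μ (Metric.closedBall x r)
  one_le_lam : 1 ≤ lam
  ratio_le : ∀ x₁ ∈ A, ∀ x₂ ∈ A, ∀ r : ℝ, 0 < r → r ≤ Metric.diam A →
    (μ (Metric.closedBall x₁ r)).toReal ≤ lam * (μ (Metric.closedBall x₂ r)).toReal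
  kappa_pos : 0 < kappa
  kappa_lt_one : kappa < 1
  one_lt_del : 1 < del
  del_le_Del : del ≤ Del
  scale_lower : ∀ x ∈ A, ∀ r : ℝ, 0 < r → r ≤ Metric.diam A →
    del * (μ (Metric.closedBall x (kappa * r))).toReal ≤ (μ (Metric.closedBall x r)).toReal
  scale_upper : ∀ x ∈ A, ∀ r : ℝ, 0 < r → r ≤ Metric.diam A →
    (μ (Metric.closedBall x r)).toReal ≤ Del * (μ (Metric.closedBall x (kappa * r))).toReal

/-- `alphaPt μ x r = log μ(B(x,r)) / log r`. -/
def alphaPt {X : Type*} [MetricSpace X] [MeasurableSpace X]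
    (μ : Measure X) (x : X) (r : ℝ) : ℝ :=
  Real.log (μ (Metric.closedBall x r)).toReal / Real.log r

/-- `g ∼ h` : `|h r - g r| = O(1/|log r|)` as `r → 0⁺`. -/
def EquivNearZero (g h : ℝ → ℝ) : Prop :=
  ∃ C : ℝ, 0 < C ∧ ∃ δ : ℝ, 0 < δ ∧ ∀ r : ℝ, 0 < r → r < δ → |h r - g r| ≤ C / |Real.log r|

/-- `g` is a representative of the equivalence class `[α_A(x,·)]` of the homogeneous set `A`. -/
def IsAlphaRep {X : Type*} [MetricSpace X] [MeasurableSpace X]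
    (A : Set X) (μ : Measure X) (g : ℝ → ℝ) : Prop :=
  ∃ x ∈ A, EquivNearZero g (fun r => alphaPt μ x r)

/-- `χ(A,B)` computed from representatives `g` of `[α_A]` and `h` of `[α_B]`. -/
def chiFun (g h : ℝ → ℝ) : ℝ :=
  Filter.limsup (fun r => |Real.log (g r / h r)|) (nhdsWithin (0 : ℝ) (Set.Ioi 0))

/-- `N(A,r)`: the smallest number of closed balls of radius `r` needed to cover `A`. -/
def coverNum {X : Type*} [MetricSpace X] (A : Set X) (r : ℝ) : ℕ :=
  sInf {m : ℕ | ∃ s : Finset X, s.card = m ∧ A ⊆ ⋃ x ∈ s, Metric.closedBall x r}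

/-- Lower box-counting dimension. -/
def lowerBoxDim {X : Type*} [MetricSpace X] (A : Set X) : ℝ :=
  Filter.liminf (fun r : ℝ => Real.log (coverNum A r : ℝ) / (-Real.log r))
    (nhdsWithin (0 : ℝ) (Set.Ioi 0))

/-- Upper box-counting dimension. -/
def upperBoxDim {X : Type*} [MetricSpace X] (A : Set X) : ℝ :=
  Filter.limsup (fun r : ℝ => Real.log (coverNum A r : ℝ) / (-Real.log r))
    (nhdsWithin (0 : ℝ) (Set.Ioi 0))

/-- Radius-based packing premeasure. -/
def packPre {X : Type*} [MetricSpace X] (A : Set X) (s : ℝ) : ℝ≥0∞ :=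
  ⨅ (δ : ℝ) (_ : 0 < δ),
    ⨆ (m : ℕ) (x : Fin m → X) (ρ : Fin m → ℝ) (_ : ∀ i, x i ∈ A)
      (_ : ∀ i, 0 < ρ i ∧ ρ i ≤ δ)
      (_ : ∀ i j, i ≠ j →
        Disjoint (Metric.closedBall (x i) (ρ i)) (Metric.closedBall (x j) (ρ j))),
      ∑ i, ENNReal.ofReal (ρ i ^ s)

/-- Radius-based packing measure. -/
def packMeasure {X : Type*} [MetricSpace X] (A : Set X) (s : ℝ) : ℝ≥0∞ :=
  ⨅ (F : ℕ → Set X) (_ : A ⊆ ⋃ m, F m), ∑' m, packPre (F m) s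

/-- Radius-based packing dimension. -/
def packDim {X : Type*} [MetricSpace X] (A : Set X) : ℝ :=
  sInf {s : ℝ | 0 ≤ s ∧ packMeasure A s = 0}

/-- Distance between two sets, valued in `ℝ≥0∞`. -/
def setDistE {X : Type*} [MetricSpace X] (E F : Set X) : ℝ≥0∞ :=
  ⨅ (a : X) (_ : a ∈ E) (b : X) (_ : b ∈ F), edist a b

/-- Uniformly disconnected set. -/
def UnifDisconn {X : Type*} [MetricSpace X] (A : Set X) : Prop :=
  ∃ C : ℝ, 1 < C ∧ ∃ rstar : ℝ, 0 < rstar ∧ ∀ x ∈ A, ∀ r : ℝ, 0 < r → r < rstar →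
    ∃ E : Set X, E ⊆ A ∧ A ∩ Metric.closedBall x r ⊆ E ∧
      E ⊆ Metric.closedBall x (C * r) ∧ ENNReal.ofReal r < setDistE E (A \ E)

/-- `A` can be bilipschitz embedded into `B`. -/
def BilipEmbed {X Y : Type*} [MetricSpace X] [MetricSpace Y] (A : Set X) (B : Set Y) : Prop :=
  ∃ (f : X → Y) (L : ℝ), 1 ≤ L ∧ Set.MapsTo f A B ∧ Set.InjOn f A ∧
    ∀ x₁ ∈ A, ∀ x₂ ∈ A,
      dist x₁ x₂ / L ≤ dist (f x₁) (f x₂) ∧ dist (f x₁) (f x₂) ≤ L * dist x₁ x₂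

/-- `A` and `B` are bilipschitz equivalent. -/
def BilipEquivSets {X Y : Type*} [MetricSpace X] [MetricSpace Y] (A : Set X) (B : Set Y) :
    Prop :=
  ∃ (f : X → Y) (L : ℝ), 1 ≤ L ∧ Set.BijOn f A B ∧
    ∀ x₁ ∈ A, ∀ x₂ ∈ A,
      dist x₁ x₂ / L ≤ dist (f x₁) (f x₂) ∧ dist (f x₁) (f x₂) ≤ L * dist x₁ x₂

/-- `A` and `B` are quasi-Lipschitz equivalent. -/
def QuasiLipEquiv {X Y : Type*} [MetricSpace X] [MetricSpace Y] (A : Set X) (B : Set Y) : Prop :=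
  ∃ f : X → Y, Set.BijOn f A B ∧
    ∀ ε : ℝ, 0 < ε → ∃ δ : ℝ, 0 < δ ∧ ∀ x₁ ∈ A, ∀ x₂ ∈ A,
      0 < dist x₁ x₂ → dist x₁ x₂ < δ →
      |Real.log (dist (f x₁) (f x₂)) / Real.log (dist x₁ x₂) - 1| < ε

/-- Ahlfors–David `s`-regular set. -/
def IsADRegular {X : Type*} [MetricSpace X] [MeasurableSpace X] (A : Set X) (s : ℝ) : Prop :=
  IsCompact A ∧ 0 < Metric.diam A ∧
    ∃ (μ : Measure X) (c : ℝ), 1 ≤ c ∧ μ Aᶜ = 0 ∧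
      ∀ x ∈ A, ∀ r : ℝ, 0 < r → r ≤ Metric.diam A →
        ENNReal.ofReal (c⁻¹ * r ^ s) ≤ μ (Metric.closedBall x r) ∧
          μ (Metric.closedBall x r) ≤ ENNReal.ofReal (c * r ^ s)

/-- `n₁ ⋯ n_k` (with `0`-based indexing of the sequence `n`). -/
def prodN (n : ℕ → ℕ) (k : ℕ) : ℕ := ∏ i ∈ Finset.range k, n i

/-- `c₁ ⋯ c_k` (with `0`-based indexing of the sequence `c`). -/
def prodC (c : ℕ → ℝ) (k : ℕ) : ℝ := ∏ i ∈ Finset.range k, c i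

/-- Admissible word for the branching sequence `n`. -/
def AdmWord (n : ℕ → ℕ) (w : List ℕ) : Prop := ∀ i : Fin w.length, w.get i < n i.val

/-- A Moran structure on `J ⊆ ℝ^d` with branching numbers `n` and ratios `c`:
`Jw w` is the basic set indexed by the word `w`. -/
structure IsMoranSystem {d : ℕ} (J : Set (EuclideanSpace ℝ (Fin d))) (n : ℕ → ℕ)
    (c : ℕ → ℝ) (Jw : List ℕ → Set (EuclideanSpace ℝ (Fin d))) : Prop where
  compact : IsCompact J
  int_nonempty : (interior J).Nonempty
  two_le_n : ∀ k, 2 ≤ n k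
  c_pos : ∀ k, 0 < c k
  c_lt_one : ∀ k, c k < 1
  c_inf_pos : ∃ c₀ : ℝ, 0 < c₀ ∧ ∀ k, c₀ ≤ c k
  root : Jw [] = J
  subset : ∀ w : List ℕ, AdmWord n w → ∀ i : ℕ, i < n w.length → Jw (w ++ [i]) ⊆ Jw w
  similar : ∀ w : List ℕ, AdmWord n w → ∀ i : ℕ, i < n w.length →
    ∃ S : EuclideanSpace ℝ (Fin d) → EuclideanSpace ℝ (Fin d),
      (∀ x y, dist (S x) (S y) = c w.length * dist x y) ∧ Jw (w ++ [i]) = S '' Jw w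
  disj_int : ∀ w : List ℕ, AdmWord n w → ∀ i : ℕ, i < n w.length → ∀ j : ℕ, j < n w.length →
    i ≠ j → Disjoint (interior (Jw (w ++ [i]))) (interior (Jw (w ++ [j])))

/-- The Moran set determined by the family `Jw`. -/
def moranSet {d : ℕ} (n : ℕ → ℕ) (Jw : List ℕ → Set (EuclideanSpace ℝ (Fin d))) :
    Set (EuclideanSpace ℝ (Fin d)) :=
  ⋂ k : ℕ, ⋃ (w : List ℕ) (_ : w.length = k ∧ AdmWord n w), Jw w

/-- The index `k` such that `(c₁⋯c_k)·D < r ≤ (c₁⋯c_{k-1})·D`. -/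
def levelOf (c : ℕ → ℝ) (D r : ℝ) : ℕ := sInf {k : ℕ | prodC c k * D < r}

/-- `Φ(r) = n₁⋯n_k` whenever `(c₁⋯c_k)·D < r ≤ (c₁⋯c_{k-1})·D`, where `D = |J|`. -/
def Phi (n : ℕ → ℕ) (c : ℕ → ℝ) (D r : ℝ) : ℕ := prodN n (levelOf c D r)

/-!
Suppose `μ` is an `s`-regular measure on the Moran set `E`. At level `k` there are
`N_k = n₁⋯n_k` basic sets, each a similar copy of `J` with ratio `P_k = c₁⋯c_k`: it has diameter
`r_k = P_k |J|`, contains a ball of radius `P_k ρ` (where `B(z, ρ) ⊆ J`), and meets `E`. A volume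
count on these disjoint inner balls gives `P_k → 0` (as `N_k ≥ 2^k`), and shows that the balls
`B(x_w, r_k)`, centred at one point `x_w ∈ E` per basic set, overlap at most `K` times with `K`
independent of `k`. They cover `E`, hence `μ(E) ≤ N_k c r_k^s` and `N_k c⁻¹ r_k^s ≤ K μ(E)`.
So `N_k P_k^s` stays between two positive constants and `log N_k / (-log P_k) → s`: the liminf
and the limsup are both equal to `s`.
-/
open Metric Set Topology

theorem continuous_of_dist_eq_mul {X Y : Type*} [PseudoMetricSpace X] [PseudoMetricSpace Y]
    {r : ℝ} (hr : 0 ≤ r) {S : X → Y} (hS : ∀ x y, dist (S x) (S y) = r * dist x y) :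
    Continuous S :=
  (LipschitzWith.of_dist_le_mul fun x y => by rw [hS, Real.coe_toNNReal r hr]).continuous

section Similarity

variable {E : Type*} [NormedAddCommGroup E] [InnerProductSpace ℝ E] [FiniteDimensional ℝ E]
  {r : ℝ} {S : E → E}

/-- `r⁻¹ • S` is an isometry, hence affine (Mazur–Ulam in a strictly convex space) and, in finite
dimension, onto. -/
theorem exists_affineIsometryEquiv_of_dist_eq_mul (hr : 0 < r)
    (hS : ∀ x y, dist (S x) (S y) = r * dist x y) :
    ∃ e : E ≃ᵃⁱ[ℝ] E, ∀ x, S x = r • e x := by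
  have hiso : Isometry fun x => r⁻¹ • S x := Isometry.of_dist_eq fun x y => by
    rw [dist_smul₀, hS, Real.norm_of_nonneg (inv_pos.2 hr).le, inv_mul_cancel_left₀ hr.ne']
  have : Inhabited E := ⟨0⟩
  refine ⟨hiso.affineIsometryOfStrictConvexSpace.toAffineIsometryEquiv rfl, fun x => ?_⟩
  simp [smul_smul, mul_inv_cancel₀ hr.ne']

theorem image_ball_of_dist_eq_mul (hr : 0 < r) (hS : ∀ x y, dist (S x) (S y) = r * dist x y)
    (y : E) (ρ : ℝ) : S '' ball y ρ = ball (S y) (r * ρ) := by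
  obtain ⟨e, he⟩ := exists_affineIsometryEquiv_of_dist_eq_mul hr hS
  have hS' : S = (r • ·) ∘ e := funext he
  rw [hS', image_comp, ← e.coe_toIsometryEquiv, e.toIsometryEquiv.image_ball, image_smul,
    _root_.smul_ball hr.ne', Real.norm_of_nonneg hr.le]
  rfl

theorem diam_image_of_dist_eq_mul (hr : 0 < r) (hS : ∀ x y, dist (S x) (S y) = r * dist x y)
    (K : Set E) : diam (S '' K) = r * diam K := by
  obtain ⟨e, he⟩ := exists_affineIsometryEquiv_of_dist_eq_mul hr hS
  have hS' : S = (r • ·) ∘ e := funext he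
  rw [hS', image_comp, image_smul, diam_smul₀, e.diam_image, Real.norm_of_nonneg hr.le]

end Similarity

theorem card_mul_pow_finrank_le_of_pairwiseDisjoint {E ι : Type*} [NormedAddCommGroup E]
    [NormedSpace ℝ E] [FiniteDimensional ℝ E] [MeasurableSpace E] [BorelSpace E]
    {F : Finset ι} {y : ι → E} {ρ R : ℝ} {p : E} (hρ : 0 < ρ) (hR : 0 ≤ R)
    (hsub : ∀ i ∈ F, ball (y i) ρ ⊆ closedBall p R)
    (hdisj : (F : Set ι).PairwiseDisjoint fun i => ball (y i) ρ) :
    (F.card : ℝ) * ρ ^ Module.finrank ℝ E ≤ R ^ Module.finrank ℝ E := by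
  set μ : Measure E := Measure.addHaar
  have hvol : (F.card : ℝ≥0∞) * ENNReal.ofReal (ρ ^ Module.finrank ℝ E) * μ (ball 0 1) ≤
      ENNReal.ofReal (R ^ Module.finrank ℝ E) * μ (ball 0 1) :=
    calc (F.card : ℝ≥0∞) * ENNReal.ofReal (ρ ^ Module.finrank ℝ E) * μ (ball 0 1)
        = ∑ i ∈ F, μ (ball (y i) ρ) := by
          simp [Measure.addHaar_ball_of_pos μ _ hρ, mul_assoc]
      _ = μ (⋃ i ∈ F, ball (y i) ρ) :=
          (measure_biUnion_finset hdisj fun _ _ => measurableSet_ball).symm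
      _ ≤ μ (closedBall p R) := measure_mono (iUnion₂_subset hsub)
      _ = ENNReal.ofReal (R ^ Module.finrank ℝ E) * μ (ball 0 1) :=
          Measure.addHaar_closedBall μ p hR
  rwa [ENNReal.mul_le_mul_iff_left (measure_ball_pos μ 0 one_pos).ne' measure_ball_lt_top.ne,
    ← ENNReal.ofReal_natCast, ← ENNReal.ofReal_mul (Nat.cast_nonneg _),
    ENNReal.ofReal_le_ofReal_iff (by positivity)] at hvol

theorem sum_measure_le_mul_measure_univ {X ι : Type*} [MeasurableSpace X] (μ : Measure X)
    {F : Finset ι} {B : ι → Set X} (hB : ∀ i ∈ F, MeasurableSet (B i)) {M : ℝ≥0∞}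
    (hM : ∀ p (G : Finset ι), G ⊆ F → (∀ i ∈ G, p ∈ B i) → (G.card : ℝ≥0∞) ≤ M) :
    ∑ i ∈ F, μ (B i) ≤ M * μ univ := by
  classical
  calc ∑ i ∈ F, μ (B i) = ∫⁻ p, ∑ i ∈ F, (B i).indicator 1 p ∂μ := by
        rw [lintegral_finsetSum _ fun i hi => measurable_one.indicator (hB i hi)]
        exact Finset.sum_congr rfl fun i hi => (lintegral_indicator_one (hB i hi)).symm
    _ ≤ ∫⁻ _, M ∂μ := lintegral_mono fun p => by
        simp only [Set.indicator_apply, Pi.one_apply, Finset.sum_boole]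
        exact hM p _ (Finset.filter_subset _ F) fun i hi => (Finset.mem_filter.1 hi).2
    _ = M * μ univ := lintegral_const M

theorem toReal_measure_univ_le_and_card_mul_le {X ι : Type*} [MeasurableSpace X]
    {μ : Measure X} {A : Set X} (hnull : μ Aᶜ = 0) (hfin : μ univ ≠ ⊤) {F : Finset ι}
    {B : ι → Set X} (hB : ∀ i ∈ F, MeasurableSet (B i)) (hcover : A ⊆ ⋃ i ∈ F, B i) {K : ℕ}
    (hK : ∀ p (G : Finset ι), G ⊆ F → (∀ i ∈ G, p ∈ B i) → G.card ≤ K) {lo hi : ℝ}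
    (hlo : ∀ i ∈ F, ENNReal.ofReal lo ≤ μ (B i)) (hhi : ∀ i ∈ F, μ (B i) ≤ ENNReal.ofReal hi)
    (hhi₀ : 0 ≤ hi) :
    (μ univ).toReal ≤ F.card * hi ∧ F.card * lo ≤ K * (μ univ).toReal := by
  constructor
  · refine ENNReal.toReal_le_of_le_ofReal (by positivity) ?_
    calc μ univ = μ A := (measure_congr (ae_eq_univ.2 hnull)).symm
      _ ≤ ∑ i ∈ F, μ (B i) := (measure_mono hcover).trans (measure_biUnion_finset_le _ _)
      _ ≤ ∑ i ∈ F, ENNReal.ofReal hi := Finset.sum_le_sum hhi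
      _ = ENNReal.ofReal (F.card * hi) := by simp [ENNReal.ofReal_mul]
  · rw [← ENNReal.ofReal_le_ofReal_iff (by positivity), ENNReal.ofReal_mul (by positivity),
      ENNReal.ofReal_mul (by positivity), ENNReal.ofReal_toReal hfin, ENNReal.ofReal_natCast,
      ENNReal.ofReal_natCast]
    calc F.card * ENNReal.ofReal lo = ∑ i ∈ F, ENNReal.ofReal lo := by simp
      _ ≤ ∑ i ∈ F, μ (B i) := Finset.sum_le_sum hlo
      _ ≤ K * μ univ := sum_measure_le_mul_measure_univ μ hB fun p G hG hp => by
        exact_mod_cast hK p G hG hp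

theorem toReal_measure_univ_pos {X : Type*} [PseudoMetricSpace X] [MeasurableSpace X]
    {μ : Measure X} {A : Set X} (hnull : μ Aᶜ = 0) {x : X} {r a b : ℝ}
    (hA : A ⊆ closedBall x r) (ha : 0 < a) (hlo : ENNReal.ofReal a ≤ μ (closedBall x r))
    (hhi : μ (closedBall x r) ≤ ENNReal.ofReal b) : 0 < (μ univ).toReal := by
  refine ENNReal.toReal_pos ?_ (ne_top_of_le_ne_top (ENNReal.ofReal_ne_top (r := b)) ?_)
  · exact ((ENNReal.ofReal_pos.2 ha).trans_le (hlo.trans (measure_mono (subset_univ _)))).ne'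
  · calc μ univ = μ A := (measure_congr (ae_eq_univ.2 hnull)).symm
      _ ≤ ENNReal.ofReal b := (measure_mono hA).trans hhi

theorem tendsto_log_div_neg_log_of_bounds {N P : ℕ → ℝ} {s a b : ℝ} (ha : 0 < a)
    (hP : Tendsto P atTop (𝓝[>] 0))
    (hNP : ∀ᶠ k in atTop, a ≤ N k * P k ^ s ∧ N k * P k ^ s ≤ b) :
    Tendsto (fun k => Real.log (N k) / -Real.log (P k)) atTop (𝓝 s) := by
  have hL : Tendsto (fun k => -Real.log (P k)) atTop atTop :=
    tendsto_neg_atBot_atTop.comp (Real.tendsto_log_nhdsGT_zero.comp hP)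
  have hP0 : ∀ᶠ k in atTop, 0 < P k := hP.eventually self_mem_nhdsWithin
  have hL0 : ∀ᶠ k in atTop, 0 < -Real.log (P k) := hL.eventually_gt_atTop 0
  set C := max |Real.log a| |Real.log b|
  have herr : Tendsto (fun k => Real.log (N k * P k ^ s) / -Real.log (P k)) atTop (𝓝 0) := by
    refine squeeze_zero_norm' ?_ ((tendsto_const_nhds (x := C)).div_atTop hL)
    filter_upwards [hNP, hL0] with k ⟨hlo, hhi⟩ hk
    rw [norm_div, Real.norm_eq_abs, Real.norm_eq_abs, abs_of_pos hk]
    gcongr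
    have h₁ := Real.log_le_log ha hlo
    have h₂ := Real.log_le_log (ha.trans_le hlo) hhi
    exact abs_le.2 ⟨by linarith [neg_abs_le (Real.log a), le_max_left |Real.log a| |Real.log b|],
      by linarith [le_abs_self (Real.log b), le_max_right |Real.log a| |Real.log b|]⟩
  refine (by simpa using herr.const_add s : Tendsto _ atTop (𝓝 s)).congr' ?_
  filter_upwards [hNP, hP0, hL0] with k ⟨hlo, _⟩ hPk hk
  have hN : 0 < N k := pos_of_mul_pos_left (ha.trans_le hlo) (Real.rpow_pos_of_pos hPk s).le
  rw [Real.log_mul hN.ne' (Real.rpow_pos_of_pos hPk s).ne', Real.log_rpow hPk]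
  have hlogP : Real.log (P k) ≠ 0 := (neg_pos.1 hk).ne
  field_simp
  ring

/-- The admissible words of length `k`, i.e. the index set `Ω_k`. -/
def admWords (n : ℕ → ℕ) : ℕ → Finset (List ℕ)
  | 0 => {[]}
  | k + 1 => (admWords n k).biUnion fun w => (Finset.range (n k)).image fun i => w ++ [i]

theorem admWord_append {n : ℕ → ℕ} {w : List ℕ} {i : ℕ} :
    AdmWord n (w ++ [i]) ↔ AdmWord n w ∧ i < n w.length := by
  constructor
  · intro h
    refine ⟨fun j => ?_, by simpa using h ⟨w.length, by simp⟩⟩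
    simpa [List.getElem_append_left j.isLt] using h ⟨j, by simp⟩
  · rintro ⟨h, hi⟩ ⟨j, hj⟩
    rcases Nat.lt_or_ge j w.length with hj' | hj'
    · simpa [List.getElem_append_left hj'] using h ⟨j, hj'⟩
    · obtain rfl : j = w.length := by simp at hj; omega
      simpa using hi

theorem mem_admWords {n : ℕ → ℕ} {k : ℕ} {w : List ℕ} :
    w ∈ admWords n k ↔ w.length = k ∧ AdmWord n w := by
  induction k generalizing w with
  | zero =>
    simp only [admWords, Finset.mem_singleton, List.length_eq_zero_iff, iff_self_and]
    rintro rfl ⟨_, ⟨⟩⟩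
  | succ k ih =>
    simp only [admWords, Finset.mem_biUnion, Finset.mem_image, Finset.mem_range]
    constructor
    · rintro ⟨u, hu, i, hi, rfl⟩
      obtain ⟨rfl, hadm⟩ := ih.1 hu
      exact ⟨by simp, admWord_append.2 ⟨hadm, hi⟩⟩
    · rintro ⟨hlen, hadm⟩
      obtain ⟨u, i, rfl⟩ : ∃ u i, w = u ++ [i] :=
        ⟨w.dropLast, w.getLast (List.ne_nil_of_length_eq_add_one hlen),
          (List.dropLast_append_getLast _).symm⟩
      obtain ⟨hu, hi⟩ := admWord_append.1 hadm
      have hul : u.length = k := by simpa using hlen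
      exact ⟨u, ih.2 ⟨hul, hu⟩, i, hul ▸ hi, rfl⟩

theorem card_admWords (n : ℕ → ℕ) (k : ℕ) : (admWords n k).card = prodN n k := by
  induction k with
  | zero => simp [admWords, prodN]
  | succ k ih =>
    rw [prodN, Finset.prod_range_succ, ← prodN, ← ih, admWords, Finset.card_biUnion]
    · have hinj (w : List ℕ) : Function.Injective fun i : ℕ => w ++ [i] :=
        (List.append_right_injective w).comp List.singleton_injective
      simp [Finset.card_image_of_injective _ (hinj _)]
    · intro w _ v _ hwv
      simp only [Finset.disjoint_left, Finset.mem_image]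
      rintro x ⟨i, -, rfl⟩ ⟨j, -, hx⟩
      exact hwv (List.append_inj' hx.symm rfl).1

theorem moranSet_subset_biUnion {d : ℕ} (n : ℕ → ℕ) (Jw : List ℕ → Set (EuclideanSpace ℝ (Fin d)))
    (k : ℕ) : moranSet n Jw ⊆ ⋃ w ∈ admWords n k, Jw w := by
  intro x hx
  obtain ⟨w, hw, hxw⟩ := mem_iUnion₂.1 (mem_iInter.1 hx k)
  exact mem_biUnion (mem_admWords.2 hw) hxw

namespace IsMoranSystem

variable {d : ℕ} {J : Set (EuclideanSpace ℝ (Fin d))} {n : ℕ → ℕ} {c : ℕ → ℝ}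
  {Jw : List ℕ → Set (EuclideanSpace ℝ (Fin d))}

theorem prodC_pos (hM : IsMoranSystem J n c Jw) (k : ℕ) : 0 < prodC c k :=
  Finset.prod_pos fun i _ => hM.c_pos i

theorem exists_ball_subset_root (hM : IsMoranSystem J n c Jw) :
    ∃ z, ∃ ρ > 0, ball z ρ ⊆ J := by
  obtain ⟨z, hz⟩ := hM.int_nonempty
  obtain ⟨ρ, hρ, hzρ⟩ := isOpen_iff.1 isOpen_interior z hz
  exact ⟨z, ρ, hρ, hzρ.trans interior_subset⟩

theorem exists_similarity (hM : IsMoranSystem J n c Jw) {w : List ℕ} (hw : AdmWord n w) :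
    ∃ S : EuclideanSpace ℝ (Fin d) → EuclideanSpace ℝ (Fin d),
      (∀ x y, dist (S x) (S y) = prodC c w.length * dist x y) ∧ Jw w = S '' J := by
  induction w using List.reverseRecOn with
  | nil => exact ⟨id, by simp [prodC], by simp [hM.root]⟩
  | append_singleton u i ih =>
    obtain ⟨hu, hi⟩ := admWord_append.1 hw
    obtain ⟨S, hS, hJu⟩ := ih hu
    obtain ⟨T, hT, hJui⟩ := hM.similar u hu i hi
    refine ⟨T ∘ S, fun x y => ?_, by rw [hJui, hJu, image_comp]⟩
    simp only [Function.comp_apply, hT, hS, List.length_append, List.length_singleton, prodC,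
      Finset.prod_range_succ]
    ring

theorem isCompact (hM : IsMoranSystem J n c Jw) {w : List ℕ} (hw : AdmWord n w) :
    IsCompact (Jw w) := by
  obtain ⟨S, hS, hJw⟩ := hM.exists_similarity hw
  exact hJw ▸ hM.compact.image (continuous_of_dist_eq_mul (hM.prodC_pos _).le hS)

theorem diam_eq (hM : IsMoranSystem J n c Jw) {w : List ℕ} (hw : AdmWord n w) :
    diam (Jw w) = prodC c w.length * diam J := by
  obtain ⟨S, hS, hJw⟩ := hM.exists_similarity hw
  rw [hJw, diam_image_of_dist_eq_mul (hM.prodC_pos _) hS]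

theorem exists_ball_subset (hM : IsMoranSystem J n c Jw) {z : EuclideanSpace ℝ (Fin d)} {ρ : ℝ}
    (hz : ball z ρ ⊆ J) {w : List ℕ} (hw : AdmWord n w) :
    ∃ y, ball y (prodC c w.length * ρ) ⊆ Jw w := by
  obtain ⟨S, hS, hJw⟩ := hM.exists_similarity hw
  exact ⟨S z, by rw [hJw, ← image_ball_of_dist_eq_mul (hM.prodC_pos _) hS]; exact image_mono hz⟩

theorem nonempty (hM : IsMoranSystem J n c Jw) {w : List ℕ} (hw : AdmWord n w) :
    (Jw w).Nonempty := by
  obtain ⟨S, -, hJw⟩ := hM.exists_similarity hw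
  rw [hJw]
  exact (hM.int_nonempty.mono interior_subset).image S

theorem subset_take (hM : IsMoranSystem J n c Jw) {w : List ℕ} (hw : AdmWord n w) (m : ℕ) :
    Jw w ⊆ Jw (w.take m) := by
  induction w using List.reverseRecOn with
  | nil => simp
  | append_singleton u i ih =>
    obtain ⟨hu, hi⟩ := admWord_append.1 hw
    rcases le_or_gt m u.length with hm | hm
    · rw [List.take_append_of_le_length hm]
      exact (hM.subset u hu i hi).trans (ih hu)
    · rw [List.take_of_length_le (by simp; omega)]

theorem subset_root (hM : IsMoranSystem J n c Jw) {w : List ℕ} (hw : AdmWord n w) : Jw w ⊆ J := by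
  simpa [hM.root] using hM.subset_take hw 0

theorem disjoint_interior (hM : IsMoranSystem J n c Jw) {k : ℕ} {w w' : List ℕ}
    (hw : w ∈ admWords n k) (hw' : w' ∈ admWords n k) (hne : w ≠ w') :
    Disjoint (interior (Jw w)) (interior (Jw w')) := by
  induction k generalizing w w' with
  | zero => simp_all [admWords]
  | succ k ih =>
    simp only [admWords, Finset.mem_biUnion, Finset.mem_image, Finset.mem_range] at hw hw'
    obtain ⟨u, hu, i, hi, rfl⟩ := hw
    obtain ⟨u', hu', i', hi', rfl⟩ := hw'
    obtain ⟨rfl, hadm⟩ := mem_admWords.1 hu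
    obtain ⟨hlen', hadm'⟩ := mem_admWords.1 hu'
    rcases eq_or_ne u u' with rfl | huu'
    · exact hM.disj_int u hadm i hi i' hi' fun h => hne (h ▸ rfl)
    · exact (ih hu hu' huu').mono (interior_mono (hM.subset u hadm i hi))
        (interior_mono (hM.subset u' hadm' i' (hlen' ▸ hi')))

theorem moranSet_subset (hM : IsMoranSystem J n c Jw) : moranSet n Jw ⊆ J := by
  simpa [admWords, hM.root] using moranSet_subset_biUnion n Jw 0

/-- Every basic set meets the Moran set: follow the branch of first children below it. -/
theorem inter_moranSet_nonempty (hM : IsMoranSystem J n c Jw) {k : ℕ} {w : List ℕ}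
    (hw : w ∈ admWords n k) : (Jw w ∩ moranSet n Jw).Nonempty := by
  obtain ⟨hlen, hadm⟩ := mem_admWords.1 hw
  set W : ℕ → List ℕ := fun m => w ++ List.replicate m 0
  have hW_succ (m : ℕ) : W (m + 1) = W m ++ [0] := by simp [W, List.replicate_succ']
  have hW (m : ℕ) : AdmWord n (W m) := by
    induction m with
    | zero => simpa [W] using hadm
    | succ m ih => exact hW_succ m ▸ admWord_append.2 ⟨ih, by linarith [hM.two_le_n (W m).length]⟩
  obtain ⟨x, hx⟩ := IsCompact.nonempty_iInter_of_sequence_nonempty_isCompact_isClosed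
    (fun m => Jw (W m))
    (fun m => hW_succ m ▸ hM.subset _ (hW m) 0 (by linarith [hM.two_le_n (W m).length]))
    (fun m => hM.nonempty (hW m)) (hM.isCompact (hW 0)) fun m => (hM.isCompact (hW m)).isClosed
  rw [mem_iInter] at hx
  have hxw : x ∈ Jw w := by simpa [W] using hx 0
  refine ⟨x, hxw, mem_iInter.2 fun m => mem_iUnion₂.2 ?_⟩
  rcases le_or_gt k m with hkm | hmk
  · exact ⟨W (m - k), ⟨by simp [W, hlen]; omega, hW _⟩, hx _⟩
  · refine ⟨w.take m, ⟨by simp [hlen]; omega, fun j => ?_⟩, hM.subset_take hadm m hxw⟩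
    simpa using hadm ⟨j, j.isLt.trans_le (List.length_take_le' _ _)⟩

theorem card_mul_pow_le (hM : IsMoranSystem J n c Jw) {z : EuclideanSpace ℝ (Fin d)} {ρ : ℝ}
    (hρ : 0 < ρ) (hz : ball z ρ ⊆ J) {k : ℕ} {G : Finset (List ℕ)} (hG : G ⊆ admWords n k)
    {p : EuclideanSpace ℝ (Fin d)} {t : ℝ} (ht : 0 ≤ t)
    (hmeet : ∀ w ∈ G, (Jw w ∩ closedBall p t).Nonempty) :
    (G.card : ℝ) * (prodC c k * ρ) ^ d ≤ (t + prodC c k * diam J) ^ d := by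
  have hball : ∀ w ∈ admWords n k, ∃ y, ball y (prodC c k * ρ) ⊆ Jw w := fun w hw => by
    obtain ⟨rfl, hadm⟩ := mem_admWords.1 hw
    exact hM.exists_ball_subset hz hadm
  choose! y hy using hball
  have hsub : ∀ w ∈ G, ball (y w) (prodC c k * ρ) ⊆ closedBall p (t + prodC c k * diam J) := by
    intro w hwG u hu
    have hw := hG hwG
    obtain ⟨rfl, hadm⟩ := mem_admWords.1 hw
    obtain ⟨q, hqw, hqp⟩ := hmeet w hwG
    calc dist u p ≤ dist u q + dist q p := dist_triangle u q p
      _ ≤ diam (Jw w) + t := add_le_add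
          (dist_le_diam_of_mem (hM.isCompact hadm).isBounded (hy w hw hu) hqw) hqp
      _ = t + prodC c w.length * diam J := by rw [hM.diam_eq hadm, add_comm]
  have hdisj : (G : Set (List ℕ)).PairwiseDisjoint fun w => ball (y w) (prodC c k * ρ) :=
    fun w hw w' hw' hne => (hM.disjoint_interior (hG hw) (hG hw') hne).mono
      (interior_maximal (hy w (hG hw)) isOpen_ball)
      (interior_maximal (hy w' (hG hw')) isOpen_ball)
  simpa using card_mul_pow_finrank_le_of_pairwiseDisjoint
    (mul_pos (hM.prodC_pos k) hρ) (by positivity [diam_nonneg (s := J), hM.prodC_pos k]) hsub hdisj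

theorem two_pow_mul_pow_le (hM : IsMoranSystem J n c Jw) {z : EuclideanSpace ℝ (Fin d)} {ρ : ℝ}
    (hρ : 0 < ρ) (hz : ball z ρ ⊆ J) (k : ℕ) :
    (2 : ℝ) ^ k * (prodC c k * ρ) ^ d ≤ (2 * diam J) ^ d := by
  have hcard := hM.card_mul_pow_le hρ hz (G := admWords n k) subset_rfl (p := z) diam_nonneg
    fun w hw => by
      obtain ⟨q, hq⟩ := hM.nonempty (mem_admWords.1 hw).2
      exact ⟨q, hq, dist_le_diam_of_mem hM.compact.isBounded
        (hM.subset_root (mem_admWords.1 hw).2 hq) (hz (mem_ball_self hρ))⟩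
  rw [card_admWords] at hcard
  have h2k : (2 : ℝ) ^ k ≤ prodN n k := by
    exact_mod_cast Finset.card_range k ▸ Finset.pow_card_le_prod _ _ 2 fun i _ => hM.two_le_n i
  have hPk := hM.prodC_pos k
  have hP1 : prodC c k ≤ 1 :=
    Finset.prod_le_one (fun i _ => (hM.c_pos i).le) fun i _ => (hM.c_lt_one i).le
  have hD : 0 ≤ diam J := diam_nonneg
  calc (2 : ℝ) ^ k * (prodC c k * ρ) ^ d ≤ prodN n k * (prodC c k * ρ) ^ d := by gcongr
    _ ≤ (diam J + prodC c k * diam J) ^ d := hcard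
    _ ≤ (2 * diam J) ^ d := by gcongr; nlinarith

theorem antitone_prodC (hM : IsMoranSystem J n c Jw) : Antitone (prodC c) :=
  antitone_nat_of_succ_le fun k => by
    rw [prodC, Finset.prod_range_succ]
    exact mul_le_of_le_one_right (hM.prodC_pos k).le (hM.c_lt_one k).le

theorem tendsto_prodC (hM : IsMoranSystem J n c Jw) :
    Tendsto (prodC c) atTop (𝓝[>] 0) := by
  obtain ⟨z, ρ, hρ, hz⟩ := hM.exists_ball_subset_root
  set l := ⨅ k, prodC c k
  have hbdd : BddBelow (range (prodC c)) :=
    ⟨0, forall_mem_range.2 fun k => (hM.prodC_pos k).le⟩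
  have hl0 : 0 ≤ l := le_ciInf fun k => (hM.prodC_pos k).le
  have hlρ : (l * ρ) ^ d ≤ 0 := by
    refine ge_of_tendsto' (by simpa only [mul_zero] using
      (tendsto_pow_atTop_nhds_zero_of_lt_one (r := (1 / 2 : ℝ)) (by norm_num)
        (by norm_num)).const_mul ((2 * diam J) ^ d)) fun k => ?_
    calc (l * ρ) ^ d ≤ (prodC c k * ρ) ^ d := by gcongr; exact ciInf_le hbdd k
      _ ≤ (2 * diam J) ^ d * (1 / 2) ^ k := by
        rw [one_div_pow, mul_one_div, le_div_iff₀ (by positivity), mul_comm]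
        exact hM.two_pow_mul_pow_le hρ hz k
  have hl : l = 0 := by
    have := (pow_eq_zero_iff'.1 (le_antisymm hlρ (by positivity))).1
    exact (mul_eq_zero.1 this).resolve_right hρ.ne'
  exact tendsto_nhdsWithin_iff.2
    ⟨hl ▸ tendsto_atTop_ciInf hM.antitone_prodC hbdd, Eventually.of_forall hM.prodC_pos⟩

theorem exists_cover (hM : IsMoranSystem J n c Jw) :
    ∃ K : ℕ, ∀ k, ∃ x : List ℕ → EuclideanSpace ℝ (Fin d),
    (∀ w ∈ admWords n k, x w ∈ moranSet n Jw) ∧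
    moranSet n Jw ⊆ ⋃ w ∈ admWords n k, closedBall (x w) (prodC c k * diam J) ∧
    ∀ p (G : Finset (List ℕ)), G ⊆ admWords n k →
      (∀ w ∈ G, p ∈ closedBall (x w) (prodC c k * diam J)) → G.card ≤ K := by
  obtain ⟨z, ρ, hρ, hz⟩ := hM.exists_ball_subset_root
  refine ⟨⌊(2 * diam J / ρ) ^ d⌋₊, fun k => ?_⟩
  have hx : ∀ w ∈ admWords n k, (Jw w ∩ moranSet n Jw).Nonempty :=
    fun w hw => hM.inter_moranSet_nonempty hw
  choose! x hxw hxA using hx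
  refine ⟨x, hxA, fun y hy => ?_, fun p G hG hp => ?_⟩
  · obtain ⟨w, hw, hyw⟩ := mem_iUnion₂.1 (moranSet_subset_biUnion n Jw k hy)
    obtain ⟨rfl, hadm⟩ := mem_admWords.1 hw
    refine mem_biUnion hw (mem_closedBall.2 ?_)
    rw [← hM.diam_eq hadm]
    exact dist_le_diam_of_mem (hM.isCompact hadm).isBounded hyw (hxw w hw)
  · have hPk := hM.prodC_pos k
    have hcard := hM.card_mul_pow_le hρ hz hG
      (by positivity [diam_nonneg (s := J)]) fun w hw =>
        ⟨x w, hxw w (hG hw), mem_closedBall_comm.1 (hp w hw)⟩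
    have hscale : (2 * (prodC c k * diam J)) ^ d = (2 * diam J / ρ) ^ d * (prodC c k * ρ) ^ d := by
      rw [← mul_pow]
      field_simp
    rw [← two_mul, hscale] at hcard
    exact Nat.le_floor (le_of_mul_le_mul_right hcard (by positivity))

theorem exists_bounds_of_isADRegular (hM : IsMoranSystem J n c Jw) {s : ℝ}
    (hA : IsADRegular (moranSet n Jw) s) :
    ∃ a b : ℝ, 0 < a ∧ ∀ᶠ k in atTop,
      a ≤ prodN n k * prodC c k ^ s ∧ prodN n k * prodC c k ^ s ≤ b := by
  obtain ⟨hAc, hdA, μ, C, hC, hnull, hball⟩ := hA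
  obtain ⟨K, hK⟩ := hM.exists_cover
  set D := diam J
  have hD : 0 < D := hdA.trans_le (diam_mono hM.moranSet_subset hM.compact.isBounded)
  have hC0 : 0 < C := one_pos.trans_le hC
  have hm : 0 < (μ univ).toReal := by
    obtain ⟨x₀, -, hx₀⟩ := hM.inter_moranSet_nonempty (k := 0) (w := []) (by simp [admWords])
    obtain ⟨hlo, hhi⟩ := hball x₀ hx₀ _ hdA le_rfl
    exact toReal_measure_univ_pos hnull
      (fun y hy => mem_closedBall.2 (dist_le_diam_of_mem hAc.isBounded hy hx₀))
      (by positivity) hlo hhi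
  set m := (μ univ).toReal
  refine ⟨m / (C * D ^ s), C * K * m / D ^ s, by positivity, ?_⟩
  have hsmall : ∀ᶠ k in atTop, prodC c k * D ≤ diam (moranSet n Jw) :=
    ((hM.tendsto_prodC.mono_right nhdsWithin_le_nhds).mul_const D).eventually
      (ge_mem_nhds (by simpa using hdA))
  filter_upwards [hsmall] with k hk
  obtain ⟨x, hxA, hcover, hoverlap⟩ := hK k
  have hPk := hM.prodC_pos k
  have hr : 0 < prodC c k * D := mul_pos hPk hD
  obtain ⟨hupper, hlower⟩ := toReal_measure_univ_le_and_card_mul_le hnull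
    (ENNReal.toReal_pos_iff.1 hm).2.ne (fun _ _ => measurableSet_closedBall) hcover hoverlap
    (fun w hw => (hball _ (hxA w hw) _ hr hk).1) (fun w hw => (hball _ (hxA w hw) _ hr hk).2)
    (by positivity)
  rw [card_admWords, Real.mul_rpow hPk.le hD.le] at hupper hlower
  have hDs : 0 < D ^ s := Real.rpow_pos_of_pos hD s
  constructor
  · rw [div_le_iff₀ (by positivity)]
    linarith
  · rw [le_div_iff₀ hDs]
    calc (prodN n k : ℝ) * prodC c k ^ s * D ^ s
        = C * (prodN n k * (C⁻¹ * (prodC c k ^ s * D ^ s))) := by field_simp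
      _ ≤ C * (K * m) := mul_le_mul_of_nonneg_left hlower hC0.le
      _ = C * K * m := by ring

end IsMoranSystem

/-- If `liminf_k log(n₁⋯n_k)/(−log(c₁⋯c_k)) < limsup_k log(n₁⋯n_k)/(−log(c₁⋯c_k))`, then no
Moran set in the class `M(J,{n_k},{c_k})` is Ahlfors–David `s`-regular for any `s ∈ (0,∞)`. -/
theorem statement7 {d : ℕ} (n : ℕ → ℕ) (c : ℕ → ℝ)
    (hlt : Filter.liminf
        (fun k : ℕ => Real.log (prodN n k : ℝ) / (-Real.log (prodC c k))) Filter.atTop <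
      Filter.limsup
        (fun k : ℕ => Real.log (prodN n k : ℝ) / (-Real.log (prodC c k))) Filter.atTop) :
    ∀ (J : Set (EuclideanSpace ℝ (Fin d))) (Jw : List ℕ → Set (EuclideanSpace ℝ (Fin d))),
      IsMoranSystem J n c Jw → ∀ s : ℝ, 0 < s → ¬ IsADRegular (moranSet n Jw) s := by
  intro J Jw hM s _ hAD
  obtain ⟨a, b, ha, hbounds⟩ := hM.exists_bounds_of_isADRegular hAD
  have hlim := tendsto_log_div_neg_log_of_bounds ha hM.tendsto_prodC hbounds
  rw [hlim.liminf_eq, hlim.limsup_eq] at hlt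
  exact lt_irrefl s hlt
end
end

section
/- Suppose A is a homogeneous subset of a metric space X and B is a compact subset of a metric space Y that is bilipschitz equivalent to A. Then B is homogeneous, and χ(A,B) = 0. -/
open scoped ENNReal

noncomputable section

open Filter MeasureTheory

/-! Push `μ` forward along the bilipschitz map `f : A → B`. Since `f` distorts distances by at
most a factor `L`, the image measure of `B(f x, r)` lies between the `μ`-measures of `B(x, r / L)`
and `B(x, L r)`. Iterating the upper scaling inequality makes `μ` doubling at every scale, so these
are comparable up to a constant; this transfers both homogeneity conditions to `f_* μ`, and shows
that `log μ(B(x, r))` and `log f_* μ(B(f x, r))` differ by `O(1)`, i.e. `α_A - α_B = O(1/|log r|)`.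
Iterating the lower scaling inequality gives a power decay `μ(B(x, r)) ≲ r ^ β`, so `α_B` stays
above a positive constant and `α_A / α_B → 1`. -/

open Metric Real Set Topology

theorem tendsto_nhdsGT_zero_of_abs_le_div_abs_log {u : ℝ → ℝ} {C : ℝ}
    (h : ∀ᶠ r in 𝓝[>] 0, |u r| ≤ C / |log r|) : Tendsto u (𝓝[>] 0) (𝓝 0) :=
  squeeze_zero_norm' h <|
    tendsto_const_nhds.div_atTop (tendsto_abs_atBot_atTop.comp tendsto_log_nhdsGT_zero)

theorem EquivNearZero.tendsto_sub {g h : ℝ → ℝ} (hgh : EquivNearZero g h) :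
    Tendsto (fun r => h r - g r) (𝓝[>] 0) (𝓝 0) := by
  obtain ⟨C, -, δ, hδ, hC⟩ := hgh
  exact tendsto_nhdsGT_zero_of_abs_le_div_abs_log <| by
    filter_upwards [Ioo_mem_nhdsGT hδ] with r hr using hC r hr.1 hr.2

theorem chiFun_eq_zero_of_tendsto_sub {g h : ℝ → ℝ} {β : ℝ} (hβ : 0 < β)
    (hh : ∀ᶠ r in 𝓝[>] 0, β ≤ h r) (hgh : Tendsto (fun r => g r - h r) (𝓝[>] 0) (𝓝 0)) :
    chiFun g h = 0 := by
  have hdiv : Tendsto (fun r => g r / h r) (𝓝[>] 0) (𝓝 1) := by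
    have hsub : Tendsto (fun r => g r / h r - 1) (𝓝[>] 0) (𝓝 0) := by
      refine squeeze_zero_norm' ?_ (by simpa using hgh.abs.div_const β)
      filter_upwards [hh] with r hr
      have hr0 : 0 < h r := hβ.trans_le hr
      rw [Real.norm_eq_abs, div_sub_one hr0.ne', abs_div, abs_of_pos hr0]
      exact div_le_div_of_nonneg_left (abs_nonneg _) hβ hr
    simpa using hsub.add_const 1
  have hlog := ((continuousAt_log one_ne_zero).tendsto.comp hdiv).abs
  rw [log_one, abs_zero] at hlog
  exact hlog.limsup_eq

theorem abs_log_sub_log_le_log_of_le_mul {p q K : ℝ} (hp : 0 < p) (hq : 0 < q)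
    (hpq : p ≤ K * q) (hqp : q ≤ K * p) : |log p - log q| ≤ log K := by
  have hK : 0 < K := pos_of_mul_pos_left (hp.trans_le hpq) hq.le
  have h1 := log_le_log hp hpq
  have h2 := log_le_log hq hqp
  rw [log_mul hK.ne' hq.ne'] at h1
  rw [log_mul hK.ne' hp.ne'] at h2
  exact abs_sub_le_iff.2 ⟨by linarith, by linarith⟩

namespace IsHomog

variable {X : Type*} [MetricSpace X] [MeasurableSpace X] {A : Set X} {μ : Measure X}
  {lam kappa del Del : ℝ}

theorem nonempty (hA : IsHomog A μ lam kappa del Del) : A.Nonempty :=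
  nonempty_iff_ne_empty.2 fun h => by simpa [h] using hA.diam_pos

theorem del_pos (hA : IsHomog A μ lam kappa del Del) : 0 < del :=
  zero_lt_one.trans hA.one_lt_del

theorem one_le_Del (hA : IsHomog A μ lam kappa del Del) : 1 ≤ Del :=
  hA.one_lt_del.le.trans hA.del_le_Del

theorem measure_closedBall_pos (hA : IsHomog A μ lam kappa del Del) {x : X} (hx : x ∈ A)
    {r : ℝ} (hr : 0 < r) : 0 < (μ (closedBall x r)).toReal :=
  haveI := hA.prob
  ENNReal.toReal_pos (hA.supp_pos x hx r hr).ne' (measure_ne_top _ _)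

theorem measure_closedBall_mono (hA : IsHomog A μ lam kappa del Del) (x : X) {r s : ℝ}
    (h : r ≤ s) : (μ (closedBall x r)).toReal ≤ (μ (closedBall x s)).toReal :=
  haveI := hA.prob
  measureReal_mono (closedBall_subset_closedBall h)

theorem measure_closedBall_le_one (hA : IsHomog A μ lam kappa del Del) (x : X) (r : ℝ) :
    (μ (closedBall x r)).toReal ≤ 1 :=
  haveI := hA.prob
  measureReal_le_one

theorem measure_closedBall_of_diam_le (hA : IsHomog A μ lam kappa del Del) {x : X} (hx : x ∈ A)
    {r : ℝ} (hr : diam A ≤ r) : (μ (closedBall x r)).toReal = 1 := by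
  have := hA.prob
  have hball : A ⊆ closedBall x r := fun y hy =>
    mem_closedBall.2 ((dist_le_diam_of_mem hA.compact.isBounded hy hx).trans hr)
  have hcompl : μ (closedBall x r)ᶜ = 0 :=
    measure_mono_null (compl_subset_compl.2 hball) hA.supp_null
  simp [measure_congr (ae_eq_univ.2 hcompl)]

theorem measure_closedBall_le_min_diam (hA : IsHomog A μ lam kappa del Del) {x : X} (hx : x ∈ A)
    (r : ℝ) : (μ (closedBall x r)).toReal ≤ (μ (closedBall x (min r (diam A)))).toReal := by
  rcases le_total r (diam A) with h | h
  · rw [min_eq_left h]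
  · rw [min_eq_right h, hA.measure_closedBall_of_diam_le hx le_rfl]
    exact hA.measure_closedBall_le_one x r

theorem pow_mul_measure_closedBall_le (hA : IsHomog A μ lam kappa del Del) {x : X} (hx : x ∈ A)
    (m : ℕ) {r : ℝ} (hr : 0 < r) (hrA : r ≤ diam A) :
    del ^ m * (μ (closedBall x (kappa ^ m * r))).toReal ≤ (μ (closedBall x r)).toReal := by
  induction m generalizing r with
  | zero => simp
  | succ m ih =>
    have hκr : kappa * r ≤ r := mul_le_of_le_one_left hr.le hA.kappa_lt_one.le
    calc del ^ (m + 1) * (μ (closedBall x (kappa ^ (m + 1) * r))).toReal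
        = del * (del ^ m * (μ (closedBall x (kappa ^ m * (kappa * r)))).toReal) := by
          rw [pow_succ, pow_succ, mul_assoc (kappa ^ m)]; ring
      _ ≤ del * (μ (closedBall x (kappa * r))).toReal := by
          gcongr
          · exact hA.del_pos.le
          · exact ih (mul_pos hA.kappa_pos hr) (hκr.trans hrA)
      _ ≤ (μ (closedBall x r)).toReal := hA.scale_lower x hx r hr hrA

theorem measure_closedBall_le_pow_mul (hA : IsHomog A μ lam kappa del Del) {x : X} (hx : x ∈ A)
    (m : ℕ) {r : ℝ} (hr : 0 < r) (hrA : r ≤ diam A) :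
    (μ (closedBall x r)).toReal ≤ Del ^ m * (μ (closedBall x (kappa ^ m * r))).toReal := by
  induction m generalizing r with
  | zero => simp
  | succ m ih =>
    have hκr : kappa * r ≤ r := mul_le_of_le_one_left hr.le hA.kappa_lt_one.le
    calc (μ (closedBall x r)).toReal
        ≤ Del * (μ (closedBall x (kappa * r))).toReal := hA.scale_upper x hx r hr hrA
      _ ≤ Del * (Del ^ m * (μ (closedBall x (kappa ^ m * (kappa * r)))).toReal) := by
          gcongr
          · exact zero_le_one.trans hA.one_le_Del
          · exact ih (mul_pos hA.kappa_pos hr) (hκr.trans hrA)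
      _ = Del ^ (m + 1) * (μ (closedBall x (kappa ^ (m + 1) * r))).toReal := by ring_nf

theorem exists_measure_closedBall_le_mul (hA : IsHomog A μ lam kappa del Del) {c : ℝ}
    (hc : 0 < c) : ∃ K, 1 ≤ K ∧ ∀ x ∈ A, ∀ r s : ℝ, 0 < s → r ≤ c * s →
      (μ (closedBall x r)).toReal ≤ K * (μ (closedBall x s)).toReal := by
  obtain ⟨m, hm⟩ := exists_pow_lt_of_lt_one (inv_pos.2 hc) hA.kappa_lt_one
  refine ⟨Del ^ m, one_le_pow₀ hA.one_le_Del, fun x hx r s hs hrs => ?_⟩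
  have hκm : kappa ^ m * min (c * s) (diam A) ≤ s :=
    calc kappa ^ m * min (c * s) (diam A) ≤ c⁻¹ * (c * s) :=
          mul_le_mul hm.le (min_le_left _ _) (le_min (by positivity) diam_nonneg) (by positivity)
      _ = s := by field_simp
  calc (μ (closedBall x r)).toReal ≤ (μ (closedBall x (c * s))).toReal :=
        hA.measure_closedBall_mono x hrs
    _ ≤ (μ (closedBall x (min (c * s) (diam A)))).toReal := hA.measure_closedBall_le_min_diam hx _
    _ ≤ Del ^ m * (μ (closedBall x (kappa ^ m * min (c * s) (diam A)))).toReal :=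
        hA.measure_closedBall_le_pow_mul hx m (lt_min (by positivity) hA.diam_pos)
          (min_le_right _ _)
    _ ≤ Del ^ m * (μ (closedBall x s)).toReal :=
        mul_le_mul_of_nonneg_left (hA.measure_closedBall_mono x hκm)
          (pow_nonneg (zero_le_one.trans hA.one_le_Del) m)

theorem exists_log_measure_closedBall_le (hA : IsHomog A μ lam kappa del Del) :
    ∃ β > 0, ∃ C, ∀ x ∈ A, ∀ r, 0 < r → r ≤ diam A →
      log (μ (closedBall x r)).toReal ≤ β * log r + C := by
  set D := diam A
  set k := -log kappa
  have hk : 0 < k := neg_pos.2 (log_neg hA.kappa_pos hA.kappa_lt_one)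
  have hdel : 0 < log del := log_pos hA.one_lt_del
  refine ⟨log del / k, div_pos hdel hk, log del - log del / k * log D, fun x hx r hr hrD => ?_⟩
  -- `m` is the generation of `r`: `κ ^ (m + 1) * D < r ≤ κ ^ m * D`
  obtain ⟨m, hrm, hmr⟩ := exists_nat_pow_near ((one_le_div hr).2 hrD)
    (one_lt_inv_iff₀.2 ⟨hA.kappa_pos, hA.kappa_lt_one⟩)
  have hr_le : r ≤ kappa ^ m * D :=
    calc r = kappa ^ m * (kappa⁻¹ ^ m * r) := by
          rw [inv_pow, ← mul_assoc, mul_inv_cancel₀ (pow_ne_zero m hA.kappa_pos.ne'), one_mul]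
      _ ≤ kappa ^ m * D :=
          mul_le_mul_of_nonneg_left ((le_div_iff₀ hr).1 hrm) (pow_nonneg hA.kappa_pos.le m)
  have hm : (log D - log r) / k < m + 1 := by
    have := log_lt_log (div_pos hA.diam_pos hr) hmr
    rw [log_div hA.diam_pos.ne' hr.ne', log_pow, log_inv, ← div_lt_iff₀ hk] at this
    exact_mod_cast this
  have hμ : log (μ (closedBall x r)).toReal ≤ -(m * log del) := by
    have hdelm : 0 < del ^ m := pow_pos hA.del_pos m
    have : del ^ m * (μ (closedBall x r)).toReal ≤ 1 :=
      calc del ^ m * (μ (closedBall x r)).toReal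
          ≤ del ^ m * (μ (closedBall x (kappa ^ m * D))).toReal :=
            mul_le_mul_of_nonneg_left (hA.measure_closedBall_mono x hr_le) hdelm.le
        _ ≤ (μ (closedBall x D)).toReal := hA.pow_mul_measure_closedBall_le hx m hA.diam_pos le_rfl
        _ ≤ 1 := hA.measure_closedBall_le_one x D
    rw [← log_pow, ← log_inv]
    exact log_le_log (hA.measure_closedBall_pos hx hr) (by rwa [← one_div, le_div_iff₀' hdelm])
  calc log (μ (closedBall x r)).toReal ≤ -(m * log del) := hμ
    _ ≤ log del * (1 - (log D - log r) / k) := by nlinarith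
    _ = log del / k * log r + (log del - log del / k * log D) := by ring

theorem exists_pos_eventually_le_alphaPt (hA : IsHomog A μ lam kappa del Del) {x : X}
    (hx : x ∈ A) : ∃ β > 0, ∀ᶠ r in 𝓝[>] 0, β ≤ alphaPt μ x r := by
  obtain ⟨β, hβ, C, hC⟩ := hA.exists_log_measure_closedBall_le
  have hCr : Tendsto (fun r => C / log r) (𝓝[>] 0) (𝓝 0) :=
    tendsto_const_nhds.div_atBot tendsto_log_nhdsGT_zero
  refine ⟨β / 2, half_pos hβ, ?_⟩
  filter_upwards [hCr.eventually (lt_mem_nhds (neg_lt_zero.2 (half_pos hβ))),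
    Ioo_mem_nhdsGT (lt_min one_pos hA.diam_pos)] with r hr ⟨hr0, hr1⟩
  have hlog : log r < 0 := log_neg hr0 (hr1.trans_le (min_le_left _ _))
  have : β + C / log r ≤ alphaPt μ x r := by
    have := div_le_div_of_nonpos_of_le hlog.le (hC x hx r hr0 (hr1.le.trans (min_le_right _ _)))
    rwa [add_div, mul_div_cancel_right₀ _ hlog.ne] at this
  linarith

theorem exists_pos_eventually_le_of_isAlphaRep (hA : IsHomog A μ lam kappa del Del)
    {g : ℝ → ℝ} (hg : IsAlphaRep A μ g) : ∃ β > 0, ∀ᶠ r in 𝓝[>] 0, β ≤ g r := by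
  obtain ⟨x, hx, hgx⟩ := hg
  obtain ⟨β, hβ, hαβ⟩ := hA.exists_pos_eventually_le_alphaPt hx
  refine ⟨β / 2, half_pos hβ, ?_⟩
  filter_upwards [hαβ, hgx.tendsto_sub.eventually (gt_mem_nhds (half_pos hβ))] with r h₁ h₂
  linarith

theorem measure_closedBall_le_mul (hA : IsHomog A μ lam kappa del Del) {x₁ x₂ : X}
    (hx₁ : x₁ ∈ A) (hx₂ : x₂ ∈ A) {r : ℝ} (hr : 0 < r) :
    (μ (closedBall x₁ r)).toReal ≤ lam * (μ (closedBall x₂ r)).toReal := by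
  rcases le_total r (diam A) with hrA | hAr
  · exact hA.ratio_le x₁ hx₁ x₂ hx₂ r hr hrA
  · rw [hA.measure_closedBall_of_diam_le hx₁ hAr, hA.measure_closedBall_of_diam_le hx₂ hAr,
      mul_one]
    exact hA.one_le_lam

theorem abs_log_measure_closedBall_sub_le (hA : IsHomog A μ lam kappa del Del) {x₁ x₂ : X}
    (hx₁ : x₁ ∈ A) (hx₂ : x₂ ∈ A) {r : ℝ} (hr : 0 < r) :
    |log (μ (closedBall x₁ r)).toReal - log (μ (closedBall x₂ r)).toReal| ≤ log lam :=
  abs_log_sub_log_le_log_of_le_mul (hA.measure_closedBall_pos hx₁ hr)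
    (hA.measure_closedBall_pos hx₂ hr) (hA.measure_closedBall_le_mul hx₁ hx₂ hr)
    (hA.measure_closedBall_le_mul hx₂ hx₁ hr)

end IsHomog

theorem tendsto_alphaPt_sub_alphaPt {X Y : Type*} [MetricSpace X] [MeasurableSpace X]
    [MetricSpace Y] [MeasurableSpace Y] {μ : Measure X} {ν : Measure Y} {x : X} {y : Y} {C : ℝ}
    (h : ∀ᶠ r in 𝓝[>] 0,
      |log (μ (closedBall x r)).toReal - log (ν (closedBall y r)).toReal| ≤ C) :
    Tendsto (fun r => alphaPt μ x r - alphaPt ν y r) (𝓝[>] 0) (𝓝 0) :=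
  tendsto_nhdsGT_zero_of_abs_le_div_abs_log <| by
    filter_upwards [h] with r hr
    rw [alphaPt, alphaPt, ← sub_div, abs_div]
    exact div_le_div_of_nonneg_right hr (abs_nonneg _)

theorem IsHomog.chiFun_eq_zero {X Y : Type*} [MetricSpace X] [MeasurableSpace X]
    [MetricSpace Y] [MeasurableSpace Y] {A : Set X} {B : Set Y} {μ : Measure X} {ν : Measure Y}
    {lam kappa del Del lam' kappa' del' Del' : ℝ} (hA : IsHomog A μ lam kappa del Del)
    (hB : IsHomog B ν lam' kappa' del' Del') {x : X} {y : Y} (hx : x ∈ A) (hy : y ∈ B) {C : ℝ}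
    (hxy : ∀ᶠ r in 𝓝[>] 0,
      |log (μ (closedBall x r)).toReal - log (ν (closedBall y r)).toReal| ≤ C)
    {gA gB : ℝ → ℝ} (hgA : IsAlphaRep A μ gA) (hgB : IsAlphaRep B ν gB) : chiFun gA gB = 0 := by
  obtain ⟨β, hβ, hgBβ⟩ := hB.exists_pos_eventually_le_of_isAlphaRep hgB
  obtain ⟨xA, hxA, hgxA⟩ := hgA
  obtain ⟨yB, hyB, hgyB⟩ := hgB
  have hA' := tendsto_alphaPt_sub_alphaPt (C := log lam) <| by
    filter_upwards [self_mem_nhdsWithin] with r hr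
    exact hA.abs_log_measure_closedBall_sub_le hxA hx hr
  have hB' := tendsto_alphaPt_sub_alphaPt (C := log lam') <| by
    filter_upwards [self_mem_nhdsWithin] with r hr
    exact hB.abs_log_measure_closedBall_sub_le hy hyB hr
  -- telescope `gA → α_A(xA) → α_A(x) → α_B(y) → α_B(yB) → gB`
  have hsum := (((hgxA.tendsto_sub.neg.add hA').add (tendsto_alphaPt_sub_alphaPt hxy)).add hB').add
    hgyB.tendsto_sub
  refine chiFun_eq_zero_of_tendsto_sub hβ hgBβ ?_
  convert hsum using 2 with r
  · ring
  · simp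

section Sandwich

variable {X Y : Type*} [MetricSpace X] [MeasurableSpace X] [MetricSpace Y] [MeasurableSpace Y]

def BallMassSandwich (μ : Measure X) (ν : Measure Y) (A : Set X) (f : X → Y) (L : ℝ) : Prop :=
  ∀ x ∈ A, ∀ r : ℝ, (μ (closedBall x r)).toReal ≤ (ν (closedBall (f x) (L * r))).toReal ∧
    (ν (closedBall (f x) r)).toReal ≤ (μ (closedBall x (L * r))).toReal

variable {A : Set X} {μ : Measure X} {ν : Measure Y} {f : X → Y} {L lam kappa del Del : ℝ}

theorem IsHomog.exists_abs_log_sub_le_of_sandwich (hA : IsHomog A μ lam kappa del Del)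
    (hL : 0 < L) (hs : BallMassSandwich μ ν A f L) :
    ∃ C, ∀ x ∈ A, ∀ r, 0 < r →
      |log (μ (closedBall x r)).toReal - log (ν (closedBall (f x) r)).toReal| ≤ C := by
  obtain ⟨K, hK, hdouble⟩ := hA.exists_measure_closedBall_le_mul hL
  refine ⟨log K, fun x hx r hr => ?_⟩
  have hrL : L * (r / L) = r := mul_div_cancel₀ r hL.ne'
  have hμν : (μ (closedBall x (r / L))).toReal ≤ (ν (closedBall (f x) r)).toReal := by
    simpa only [hrL] using (hs x hx (r / L)).1
  refine abs_log_sub_log_le_log_of_le_mul (hA.measure_closedBall_pos hx hr)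
    ((hA.measure_closedBall_pos hx (div_pos hr hL)).trans_le hμν) ?_
    ((hs x hx r).2.trans (hdouble x hx _ r hr le_rfl))
  calc (μ (closedBall x r)).toReal ≤ K * (μ (closedBall x (r / L))).toReal :=
        hdouble x hx r _ (div_pos hr hL) hrL.ge
    _ ≤ K * (ν (closedBall (f x) r)).toReal := by gcongr

theorem IsHomog.exists_ratio_le_of_sandwich (hA : IsHomog A μ lam kappa del Del)
    (hL : 0 < L) (hs : BallMassSandwich μ ν A f L) :
    ∃ K, 1 ≤ K ∧ ∀ x₁ ∈ A, ∀ x₂ ∈ A, ∀ r, 0 < r →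
      (ν (closedBall (f x₁) r)).toReal ≤ K * (ν (closedBall (f x₂) r)).toReal := by
  obtain ⟨K, hK, hdouble⟩ := hA.exists_measure_closedBall_le_mul (pow_pos hL 2)
  refine ⟨K * lam, one_le_mul_of_one_le_of_one_le hK hA.one_le_lam, fun x₁ hx₁ x₂ hx₂ r hr => ?_⟩
  have hrL : L * (r / L) = r := mul_div_cancel₀ r hL.ne'
  calc (ν (closedBall (f x₁) r)).toReal ≤ (μ (closedBall x₁ (L * r))).toReal := (hs x₁ hx₁ r).2
    _ ≤ K * (μ (closedBall x₁ (r / L))).toReal :=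
        hdouble x₁ hx₁ _ _ (div_pos hr hL) (by field_simp; rfl)
    _ ≤ K * (lam * (μ (closedBall x₂ (r / L))).toReal) := by
        gcongr
        exact hA.measure_closedBall_le_mul hx₁ hx₂ (div_pos hr hL)
    _ ≤ K * (lam * (ν (closedBall (f x₂) r)).toReal) := by
        have := (hs x₂ hx₂ (r / L)).1
        rw [hrL] at this
        gcongr
        linarith [hA.one_le_lam]
    _ = K * lam * (ν (closedBall (f x₂) r)).toReal := by ring

theorem IsHomog.scale_lower_of_sandwich (hA : IsHomog A μ lam kappa del Del)
    (hL : 0 < L) (hs : BallMassSandwich μ ν A f L) {x : X} (hx : x ∈ A) {r : ℝ} (hr : 0 < r)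
    (hrA : r ≤ L * diam A) :
    del * (ν (closedBall (f x) (kappa / L ^ 2 * r))).toReal ≤ (ν (closedBall (f x) r)).toReal :=
  calc del * (ν (closedBall (f x) (kappa / L ^ 2 * r))).toReal
      ≤ del * (μ (closedBall x (kappa * (r / L)))).toReal := by
        have := (hs x hx (kappa / L ^ 2 * r)).2
        rw [show L * (kappa / L ^ 2 * r) = kappa * (r / L) by field_simp] at this
        gcongr
        exact hA.del_pos.le
    _ ≤ (μ (closedBall x (r / L))).toReal :=
        hA.scale_lower x hx _ (div_pos hr hL) ((div_le_iff₀' hL).2 hrA)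
    _ ≤ (ν (closedBall (f x) r)).toReal := by
        simpa only [mul_div_cancel₀ r hL.ne'] using (hs x hx (r / L)).1

theorem IsHomog.exists_scale_upper_of_sandwich (hA : IsHomog A μ lam kappa del Del)
    (hL : 0 < L) (hs : BallMassSandwich μ ν A f L) :
    ∃ K, ∀ x ∈ A, ∀ r, 0 < r →
      (ν (closedBall (f x) r)).toReal ≤ K * (ν (closedBall (f x) (kappa / L ^ 2 * r))).toReal := by
  obtain ⟨K, hK, hdouble⟩ := hA.exists_measure_closedBall_le_mul (c := L ^ 4 / kappa)
    (div_pos (pow_pos hL 4) hA.kappa_pos)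
  refine ⟨K, fun x hx r hr => ?_⟩
  have hs' : 0 < kappa / L ^ 2 * r / L := by have := hA.kappa_pos; positivity
  calc (ν (closedBall (f x) r)).toReal ≤ (μ (closedBall x (L * r))).toReal := (hs x hx r).2
    _ ≤ K * (μ (closedBall x (kappa / L ^ 2 * r / L))).toReal :=
        hdouble x hx _ _ hs' (by field_simp [hA.kappa_pos.ne']; rfl)
    _ ≤ K * (ν (closedBall (f x) (kappa / L ^ 2 * r))).toReal := by
        have := (hs x hx (kappa / L ^ 2 * r / L)).1
        rw [mul_div_cancel₀ _ hL.ne'] at this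
        gcongr

end Sandwich

theorem ContinuousOn.aemeasurable_of_measure_compl_eq_zero {X Y : Type*} [TopologicalSpace X]
    [MeasurableSpace X] [OpensMeasurableSpace X] [TopologicalSpace Y] [MeasurableSpace Y]
    [BorelSpace Y] {A : Set X} {μ : Measure X} {f : X → Y} (hf : ContinuousOn f A)
    (hA : MeasurableSet A) (hμA : μ Aᶜ = 0) : AEMeasurable f μ := by
  rw [← Measure.restrict_eq_self_of_ae_mem (mem_ae_iff.2 hμA)]
  exact hf.aemeasurable hA

theorem map_compl_eq_zero_of_mapsTo {X Y : Type*} [MeasurableSpace X] [MeasurableSpace Y]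
    {A : Set X} {B : Set Y} {μ : Measure X} {f : X → Y} (hμA : μ Aᶜ = 0) (hf : AEMeasurable f μ)
    (hB : MeasurableSet B) (hfAB : MapsTo f A B) : μ.map f Bᶜ = 0 := by
  rw [Measure.map_apply_of_aemeasurable hf hB.compl]
  exact measure_mono_null (fun x hx hxA => hx (hfAB hxA)) hμA

section Pushforward

variable {X Y : Type*} [MetricSpace X] [MeasurableSpace X] [MetricSpace Y] [MeasurableSpace Y]
  [OpensMeasurableSpace Y] {A : Set X} {μ : Measure X} {f : X → Y} {L : ℝ}

theorem measure_closedBall_le_map_closedBall (hμA : μ Aᶜ = 0) (hf : AEMeasurable f μ)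
    (hL : 0 ≤ L) (hlip : ∀ x₁ ∈ A, ∀ x₂ ∈ A, dist (f x₁) (f x₂) ≤ L * dist x₁ x₂) {x : X}
    (hx : x ∈ A) (r : ℝ) : μ (closedBall x r) ≤ μ.map f (closedBall (f x) (L * r)) := by
  rw [Measure.map_apply_of_aemeasurable hf measurableSet_closedBall]
  refine measure_mono_ae ?_
  filter_upwards [mem_ae_iff.2 hμA] with z hz hzr
  exact (hlip z hz x hx).trans (mul_le_mul_of_nonneg_left (mem_closedBall.1 hzr) hL)

theorem map_closedBall_le_measure_closedBall (hμA : μ Aᶜ = 0) (hf : AEMeasurable f μ)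
    (hL : 0 ≤ L) (hco : ∀ x₁ ∈ A, ∀ x₂ ∈ A, dist x₁ x₂ ≤ L * dist (f x₁) (f x₂)) {x : X}
    (hx : x ∈ A) (r : ℝ) : μ.map f (closedBall (f x) r) ≤ μ (closedBall x (L * r)) := by
  rw [Measure.map_apply_of_aemeasurable hf measurableSet_closedBall]
  refine measure_mono_ae ?_
  filter_upwards [mem_ae_iff.2 hμA] with z hz hzr
  exact (hco z hz x hx).trans (mul_le_mul_of_nonneg_left (mem_closedBall.1 hzr) hL)

theorem ballMassSandwich_map [IsFiniteMeasure μ] (hμA : μ Aᶜ = 0) (hfμ : AEMeasurable f μ)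
    (hL : 0 ≤ L) (hlip : ∀ x₁ ∈ A, ∀ x₂ ∈ A, dist (f x₁) (f x₂) ≤ L * dist x₁ x₂)
    (hco : ∀ x₁ ∈ A, ∀ x₂ ∈ A, dist x₁ x₂ ≤ L * dist (f x₁) (f x₂)) :
    BallMassSandwich μ (μ.map f) A f L := fun _ hx r =>
  ⟨ENNReal.toReal_mono (measure_ne_top _ _)
      (measure_closedBall_le_map_closedBall hμA hfμ hL hlip hx r),
    ENNReal.toReal_mono (measure_ne_top _ _)
      (map_closedBall_le_measure_closedBall hμA hfμ hL hco hx r)⟩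

end Pushforward

section Bilipschitz

variable {X Y : Type*} [MetricSpace X] [MetricSpace Y] {A : Set X} {f : X → Y} {L : ℝ}

theorem diam_image_le_mul (hA : Bornology.IsBounded A) (hL : 0 ≤ L)
    (hlip : ∀ x₁ ∈ A, ∀ x₂ ∈ A, dist (f x₁) (f x₂) ≤ L * dist x₁ x₂) :
    diam (f '' A) ≤ L * diam A :=
  diam_le_of_forall_dist_le (mul_nonneg hL diam_nonneg) <| by
    rintro _ ⟨x₁, hx₁, rfl⟩ _ ⟨x₂, hx₂, rfl⟩
    exact (hlip x₁ hx₁ x₂ hx₂).trans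
      (mul_le_mul_of_nonneg_left (dist_le_diam_of_mem hA hx₁ hx₂) hL)

theorem diam_le_mul_diam_image (hfA : Bornology.IsBounded (f '' A)) (hL : 0 ≤ L)
    (hco : ∀ x₁ ∈ A, ∀ x₂ ∈ A, dist x₁ x₂ ≤ L * dist (f x₁) (f x₂)) :
    diam A ≤ L * diam (f '' A) :=
  diam_le_of_forall_dist_le (mul_nonneg hL diam_nonneg) fun x₁ hx₁ x₂ hx₂ =>
    (hco x₁ hx₁ x₂ hx₂).trans <| mul_le_mul_of_nonneg_left
      (dist_le_diam_of_mem hfA (mem_image_of_mem f hx₁) (mem_image_of_mem f hx₂)) hL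

end Bilipschitz

theorem IsHomog.of_ballMassSandwich {X Y : Type*} [MetricSpace X] [MeasurableSpace X]
    [MetricSpace Y] [MeasurableSpace Y] {A : Set X} {B : Set Y} {μ : Measure X} {ν : Measure Y}
    {f : X → Y} {L lam kappa del Del : ℝ} (hA : IsHomog A μ lam kappa del Del)
    (hB : IsCompact B) [IsProbabilityMeasure ν] (hνB : ν Bᶜ = 0) (hfAB : SurjOn f A B)
    (hL : 1 ≤ L) (hBA : diam B ≤ L * diam A) (hAB : diam A ≤ L * diam B)
    (hs : BallMassSandwich μ ν A f L) :
    ∃ lam' kappa' del' Del', IsHomog B ν lam' kappa' del' Del' := by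
  have hL0 : 0 < L := zero_lt_one.trans_le hL
  obtain ⟨K₁, hK₁, hratio⟩ := hA.exists_ratio_le_of_sandwich hL0 hs
  obtain ⟨K₂, hupper⟩ := hA.exists_scale_upper_of_sandwich hL0 hs
  refine ⟨K₁, kappa / L ^ 2, del, max del K₂,
    { compact := hB
      diam_pos := pos_of_mul_pos_right (hA.diam_pos.trans_le hAB) hL0.le
      prob := ‹_›
      supp_null := hνB
      supp_pos := ?_
      one_le_lam := hK₁
      ratio_le := ?_
      kappa_pos := div_pos hA.kappa_pos (pow_pos hL0 2)
      kappa_lt_one := (div_lt_one (pow_pos hL0 2)).2 (hA.kappa_lt_one.trans_le (one_le_pow₀ hL))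
      one_lt_del := hA.one_lt_del
      del_le_Del := le_max_left _ _
      scale_lower := ?_
      scale_upper := ?_ }⟩
  · intro y hy r hr
    obtain ⟨x, hx, rfl⟩ := hfAB hy
    have := (hs x hx (r / L)).1
    rw [mul_div_cancel₀ r hL0.ne'] at this
    exact (ENNReal.toReal_pos_iff.1
      ((hA.measure_closedBall_pos hx (div_pos hr hL0)).trans_le this)).1
  · intro y₁ hy₁ y₂ hy₂ r hr _
    obtain ⟨x₁, hx₁, rfl⟩ := hfAB hy₁
    obtain ⟨x₂, hx₂, rfl⟩ := hfAB hy₂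
    exact hratio x₁ hx₁ x₂ hx₂ r hr
  · intro y hy r hr hrB
    obtain ⟨x, hx, rfl⟩ := hfAB hy
    exact hA.scale_lower_of_sandwich hL0 hs hx hr (hrB.trans hBA)
  · intro y hy r hr _
    obtain ⟨x, hx, rfl⟩ := hfAB hy
    exact (hupper x hx r hr).trans
      (mul_le_mul_of_nonneg_right (le_max_right _ _) ENNReal.toReal_nonneg)

/-- A compact set bilipschitz equivalent to a homogeneous set is homogeneous, and
`χ(A,B) = 0`. -/
theorem statement8 {X Y : Type*} [MetricSpace X] [MeasurableSpace X] [BorelSpace X]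
    [MetricSpace Y] [MeasurableSpace Y] [BorelSpace Y]
    (A : Set X) (B : Set Y) (μ : Measure X) (lam kappa del Del : ℝ)
    (hA : IsHomog A μ lam kappa del Del) (hB : IsCompact B)
    (hbil : BilipEquivSets A B) :
    ∃ (ν : Measure Y) (lam' kappa' del' Del' : ℝ),
      IsHomog B ν lam' kappa' del' Del' ∧
      ∀ gA gB : ℝ → ℝ, IsAlphaRep A μ gA → IsAlphaRep B ν gB → chiFun gA gB = 0 := by
  obtain ⟨f, L, hL, hfAB, hf⟩ := hbil
  have hL0 : 0 < L := zero_lt_one.trans_le hL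
  have hlip : ∀ x₁ ∈ A, ∀ x₂ ∈ A, dist (f x₁) (f x₂) ≤ L * dist x₁ x₂ :=
    fun x₁ hx₁ x₂ hx₂ => (hf x₁ hx₁ x₂ hx₂).2
  have hco : ∀ x₁ ∈ A, ∀ x₂ ∈ A, dist x₁ x₂ ≤ L * dist (f x₁) (f x₂) :=
    fun x₁ hx₁ x₂ hx₂ => (div_le_iff₀' hL0).1 (hf x₁ hx₁ x₂ hx₂).1
  have hfμ : AEMeasurable f μ :=
    (LipschitzOnWith.of_dist_le_mul (K := L.toNNReal) fun x₁ hx₁ x₂ hx₂ => by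
      simpa [Real.coe_toNNReal L hL0.le] using hlip x₁ hx₁ x₂ hx₂).continuousOn
      |>.aemeasurable_of_measure_compl_eq_zero hA.compact.isClosed.measurableSet hA.supp_null
  have := hA.prob
  have := Measure.isProbabilityMeasure_map hfμ
  have hs := ballMassSandwich_map hA.supp_null hfμ hL0.le hlip hco
  have hBA := hfAB.image_eq ▸ diam_image_le_mul hA.compact.isBounded hL0.le hlip
  have hAB := hfAB.image_eq ▸ diam_le_mul_diam_image (hfAB.image_eq ▸ hB.isBounded) hL0.le hco
  obtain ⟨lam', kappa', del', Del', hν⟩ :=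
    hA.of_ballMassSandwich hB (map_compl_eq_zero_of_mapsTo hA.supp_null hfμ
      hB.isClosed.measurableSet hfAB.mapsTo) hfAB.surjOn hL hBA hAB hs
  obtain ⟨C, hC⟩ := hA.exists_abs_log_sub_le_of_sandwich hL0 hs
  obtain ⟨x, hx⟩ := hA.nonempty
  exact ⟨μ.map f, lam', kappa', del', Del', hν, fun gA gB hgA hgB =>
    hA.chiFun_eq_zero hν hx (hfAB.mapsTo hx)
      (eventually_mem_nhdsWithin.mono fun r hr => hC x hx r hr) hgA hgB⟩
end
end
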